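/- For a Banach space X, X is a Hilbert–Schmidt space (every bounded operator between Hilbert spaces that factors through X is Hilbert–Schmidt) if and only if every bounded linear operator from X to ℓ₂ is 2-summing. -/

import Mathlib

/-- `T` is `p`-summing with constant `c`. -/
def IsPSumming {X Y : Type} [NormedAddCommGroup X] [NormedSpace ℝ X]
    [NormedAddCommGroup Y] [NormedSpace ℝ Y]
    (p : ℝ) (T : X →L[ℝ] Y) (c : ℝ) : Prop :=
  ∀ (n : ℕ) (x : Fin n → X),
    (∑ i, ‖T (x i)‖ ^ p) ^ (1 / p) ≤
      c * ⨆ f : {f : X →L[ℝ] ℝ // ‖f‖ ≤ 1}, (∑ i, |f.1 (x i)| ^ p) ^ (1 / p)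

/-- `T` (between Hilbert spaces) is a Hilbert–Schmidt operator:
`Σᵢ ‖T (b i)‖² < ∞` for every Hilbert basis `b`. -/
def IsHilbertSchmidt {H₁ H₂ : Type}
    [NormedAddCommGroup H₁] [InnerProductSpace ℝ H₁] [CompleteSpace H₁]
    [NormedAddCommGroup H₂] [InnerProductSpace ℝ H₂] [CompleteSpace H₂]
    (T : H₁ →L[ℝ] H₂) : Prop :=
  ∀ (ι : Type) (b : HilbertBasis ι ℝ H₁), Summable fun i => ‖T (b i)‖ ^ (2 : ℕ)

/-- `X` is a Hilbert–Schmidt space: every bounded operator between Hilbert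
spaces that factors through `X` is Hilbert–Schmidt. -/
def IsHilbertSchmidtSpace (X : Type) [NormedAddCommGroup X]
    [NormedSpace ℝ X] : Prop :=
  ∀ (H₁ H₂ : Type)
    [NormedAddCommGroup H₁] [InnerProductSpace ℝ H₁] [CompleteSpace H₁]
    [NormedAddCommGroup H₂] [InnerProductSpace ℝ H₂] [CompleteSpace H₂]
    (T : H₁ →L[ℝ] H₂) (T₁ : H₁ →L[ℝ] X) (T₂ : X →L[ℝ] H₂),
    T = T₂.comp T₁ → IsHilbertSchmidt T

/-!
Both directions are uniform-boundedness arguments, resting on two facts about a finite family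
`x` in `X` and an orthonormal family `e` in a Hilbert space: `x` is the image of `e` under
`a ↦ ∑ ⟪e k, a⟫ • x k`, an operator of norm at most the weak ℓ²-norm of `x`; and the image of `e`
under any `R` has weak ℓ²-norm at most `‖R‖`.

If `X` is a Hilbert–Schmidt space and `T : X → G`, the maps `S ↦ (T (S eₖ))_{k<n}` on
`ℓ² →L X` are pointwise bounded by the Hilbert–Schmidt norms of the `T ∘ S`, hence uniformly
bounded, and taking `S` as above makes `T` 2-summing. Conversely, if every `T : X → ℓ²` is
2-summing, Banach–Steinhaus gives `π₂(T) ≤ C ‖T‖`. This passes to any Hilbert space target,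
since the finite-dimensional span of `T x` embeds isometrically into `ℓ²` through a contraction,
and then `∑ ‖T₂ (T₁ bᵢ)‖² ≤ (C ‖T₂‖ ‖T₁‖)²` over every finite set of basis vectors `bᵢ`.
-/

open scoped RealInnerProductSpace lp

section WeakNorm

variable {X : Type*} [NormedAddCommGroup X] [NormedSpace ℝ X] {κ : Type*} [Fintype κ]

noncomputable def weakL2Norm (x : κ → X) : ℝ :=
  ⨆ f : {f : X →L[ℝ] ℝ // ‖f‖ ≤ 1}, √(∑ k, f.1 (x k) ^ 2)

lemma weakL2Norm_nonneg (x : κ → X) : 0 ≤ weakL2Norm x :=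
  Real.iSup_nonneg fun _ => Real.sqrt_nonneg _

lemma sqrt_sum_sq_le_weakL2Norm (x : κ → X) (f : X →L[ℝ] ℝ) (hf : ‖f‖ ≤ 1) :
    √(∑ k, f (x k) ^ 2) ≤ weakL2Norm x := by
  refine le_ciSup (f := fun f : {f : X →L[ℝ] ℝ // ‖f‖ ≤ 1} => √(∑ k, f.1 (x k) ^ 2))
    ⟨√(∑ k, ‖x k‖ ^ 2), ?_⟩ ⟨f, hf⟩
  rintro - ⟨g, rfl⟩
  refine Real.sqrt_le_sqrt (Finset.sum_le_sum fun k _ => ?_)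
  calc g.1 (x k) ^ 2 = ‖g.1 (x k)‖ ^ 2 := by rw [Real.norm_eq_abs, sq_abs]
    _ ≤ ‖x k‖ ^ 2 := by gcongr; exact g.1.le_of_opNorm_le g.2 _ |>.trans_eq (one_mul _)

lemma norm_sum_smul_le_weakL2Norm (x : κ → X) (t : κ → ℝ) :
    ‖∑ k, t k • x k‖ ≤ √(∑ k, t k ^ 2) * weakL2Norm x := by
  obtain ⟨f, hf, hfx⟩ := exists_dual_vector'' ℝ (∑ k, t k • x k)
  calc ‖∑ k, t k • x k‖ = ∑ k, t k * f (x k) := by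
        simpa [map_sum] using hfx.symm
    _ ≤ √(∑ k, t k ^ 2) * √(∑ k, f (x k) ^ 2) := Real.sum_mul_le_sqrt_mul_sqrt _ _ _
    _ ≤ √(∑ k, t k ^ 2) * weakL2Norm x := by
        gcongr; exact sqrt_sum_sq_le_weakL2Norm x f hf

end WeakNorm

section Orthonormal

variable {H : Type*} [NormedAddCommGroup H] [InnerProductSpace ℝ H] {κ : Type*} [Fintype κ]
  {e : κ → H}

lemma Orthonormal.sqrt_sum_sq_inner_le (he : Orthonormal ℝ e) (a : H) :
    √(∑ k, ⟪e k, a⟫ ^ 2) ≤ ‖a‖ := by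
  have bessel := he.sum_inner_products_le (s := Finset.univ) a
  simp only [Real.norm_eq_abs, sq_abs] at bessel
  exact Real.sqrt_le_sqrt bessel |>.trans_eq (Real.sqrt_sq (norm_nonneg a))

variable {X : Type*} [NormedAddCommGroup X] [NormedSpace ℝ X]

lemma weakL2Norm_comp_orthonormal_le [CompleteSpace H] (he : Orthonormal ℝ e) (R : H →L[ℝ] X) :
    weakL2Norm (fun k => R (e k)) ≤ ‖R‖ := by
  refine Real.iSup_le (fun f => ?_) (norm_nonneg _)
  set y := (InnerProductSpace.toDual ℝ H).symm (f.1.comp R)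
  have hy : ∀ k, f.1 (R (e k)) = ⟪e k, y⟫ := fun k => by
    rw [real_inner_comm, InnerProductSpace.toDual_symm_apply]; rfl
  calc √(∑ k, f.1 (R (e k)) ^ 2) = √(∑ k, ⟪e k, y⟫ ^ 2) := by simp only [hy]
    _ ≤ ‖y‖ := he.sqrt_sum_sq_inner_le y
    _ = ‖f.1.comp R‖ := LinearIsometryEquiv.norm_map _ _
    _ ≤ ‖R‖ := (f.1.opNorm_comp_le R).trans (mul_le_of_le_one_left (norm_nonneg _) f.2)

noncomputable def sumInnerSMul (e : κ → H) (x : κ → X) : H →L[ℝ] X :=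
  ∑ k, (innerSL ℝ (e k)).smulRight (x k)

lemma sumInnerSMul_apply (e : κ → H) (x : κ → X) (a : H) :
    sumInnerSMul e x a = ∑ k, ⟪e k, a⟫ • x k := by
  simp [sumInnerSMul]

lemma sumInnerSMul_apply_orthonormal (he : Orthonormal ℝ e) (x : κ → X) (k : κ) :
    sumInnerSMul e x (e k) = x k := by
  classical
  simp [sumInnerSMul_apply, orthonormal_iff_ite.mp he]

lemma norm_sumInnerSMul_le (he : Orthonormal ℝ e) (x : κ → X) :
    ‖sumInnerSMul e x‖ ≤ weakL2Norm x := by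
  refine ContinuousLinearMap.opNorm_le_bound _ (weakL2Norm_nonneg x) fun a => ?_
  rw [sumInnerSMul_apply, mul_comm]
  exact (norm_sum_smul_le_weakL2Norm x _).trans
    (mul_le_mul_of_nonneg_right (he.sqrt_sum_sq_inner_le a) (weakL2Norm_nonneg x))

end Orthonormal

section EvalFamily

variable {A Y : Type*} [NormedAddCommGroup A] [NormedSpace ℝ A] [NormedAddCommGroup Y]
  [NormedSpace ℝ Y] {κ : Type*} [Fintype κ]

noncomputable def evalFamily (x : κ → A) : (A →L[ℝ] Y) →L[ℝ] PiLp 2 (fun _ : κ => Y) :=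
  (PiLp.continuousLinearEquiv 2 ℝ (fun _ : κ => Y)).symm.toContinuousLinearMap.comp
    (ContinuousLinearMap.pi fun k => ContinuousLinearMap.apply ℝ Y (x k))

lemma norm_evalFamily_apply (x : κ → A) (T : A →L[ℝ] Y) :
    ‖evalFamily x T‖ = √(∑ k, ‖T (x k)‖ ^ 2) := by
  rw [PiLp.norm_eq_of_L2]; rfl

end EvalFamily

lemma isPSumming_two_iff {X Y : Type} [NormedAddCommGroup X] [NormedSpace ℝ X]
    [NormedAddCommGroup Y] [NormedSpace ℝ Y] (T : X →L[ℝ] Y) (c : ℝ) :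
    IsPSumming 2 T c ↔ ∀ (n : ℕ) (x : Fin n → X), ‖evalFamily x T‖ ≤ c * weakL2Norm x := by
  simp only [IsPSumming, norm_evalFamily_apply, weakL2Norm, Real.rpow_two, sq_abs,
    Real.sqrt_eq_rpow]

theorem banach_steinhaus_pi {ι E : Type*} {F : ι → Type*} [NormedAddCommGroup E]
    [NormedSpace ℝ E] [CompleteSpace E] [∀ i, NormedAddCommGroup (F i)]
    [∀ i, NormedSpace ℝ (F i)] (g : ∀ i, E →L[ℝ] F i) (h : ∀ v, ∃ C, ∀ i, ‖g i v‖ ≤ C) :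
    ∃ C, ∀ i, ‖g i‖ ≤ C := by
  let p : ι → Seminorm ℝ E := fun i => (normSeminorm ℝ (F i)).comp (g i).toLinearMap
  have bdd : BddAbove (Set.range p) := by
    refine Seminorm.bddAbove_range_iff.mpr fun v => ?_
    obtain ⟨C, hC⟩ := h v
    exact ⟨C, Set.forall_mem_range.mpr hC⟩
  have hcont := Seminorm.continuous_iSup p (fun i => (g i).continuous.norm) bdd
  rw [← Seminorm.coe_iSup_eq bdd] at hcont
  obtain ⟨C, hC0, hC⟩ := Seminorm.bound_of_continuous_normedSpace _ hcont
  refine ⟨C, fun i => (g i).opNorm_le_bound hC0.le fun v => ?_⟩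
  exact (le_ciSup bdd i : p i ≤ ⨆ i, p i) v |>.trans (hC v)

theorem Submodule.exists_contraction_to_ell2_isometric_on {H : Type*} [NormedAddCommGroup H]
    [InnerProductSpace ℝ H] (F : Submodule ℝ H) [FiniteDimensional ℝ F] :
    ∃ E : H →L[ℝ] ℓ²(ℕ, ℝ), ‖E‖ ≤ 1 ∧ ∀ y ∈ F, ‖E y‖ = ‖y‖ := by
  let f := stdOrthonormalBasis ℝ F
  let v : Fin _ → H := fun k => f k
  have hv : Orthonormal ℝ v := f.orthonormal.comp_linearIsometry F.subtypeₗᵢ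
  let b : HilbertBasis ℕ ℝ ℓ²(ℕ, ℝ) := default
  let u : Fin (Module.finrank ℝ F) → ℓ²(ℕ, ℝ) := fun k => b k
  have hu : Orthonormal ℝ u := b.orthonormal.comp _ Fin.val_injective
  have hE : ‖sumInnerSMul v u‖ ≤ 1 :=
    (norm_sumInnerSMul_le hv u).trans <|
      (weakL2Norm_comp_orthonormal_le hu (.id ℝ _)).trans ContinuousLinearMap.norm_id_le
  refine ⟨sumInnerSMul v u, hE, fun y hy => le_antisymm ?_ ?_⟩
  · exact (ContinuousLinearMap.le_of_opNorm_le _ hE y).trans_eq (one_mul _)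
  · have parseval : √(∑ k, ⟪v k, y⟫ ^ 2) = ‖y‖ := by
      have := f.sum_sq_inner_right ⟨y, hy⟩
      simp only [Submodule.coe_inner] at this
      rw [this, Submodule.coe_norm, Real.sqrt_sq (norm_nonneg _)]
    have coeff : ∀ k, ⟪u k, sumInnerSMul v u y⟫ = ⟪v k, y⟫ := fun k => by
      rw [sumInnerSMul_apply, hu.inner_right_fintype]
    rw [← parseval]
    simpa only [coeff] using hu.sqrt_sum_sq_inner_le (sumInnerSMul v u y)

section TwoSumming

variable {X : Type} [NormedAddCommGroup X] [NormedSpace ℝ X]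

theorem isPSumming_two_of_isHilbertSchmidtSpace [CompleteSpace X]
    (hX : IsHilbertSchmidtSpace X) {G : Type} [NormedAddCommGroup G] [InnerProductSpace ℝ G]
    [CompleteSpace G] (T : X →L[ℝ] G) :
    ∃ c, 0 ≤ c ∧ IsPSumming 2 T c := by
  let b : HilbertBasis ℕ ℝ ℓ²(ℕ, ℝ) := default
  let e : ∀ n, Fin n → ℓ²(ℕ, ℝ) := fun n k => b k
  have he : ∀ n, Orthonormal ℝ (e n) := fun n => b.orthonormal.comp _ Fin.val_injective
  let g : ∀ n, (ℓ²(ℕ, ℝ) →L[ℝ] X) →L[ℝ] PiLp 2 (fun _ : Fin n => G) :=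
    fun n => (evalFamily (e n)).comp (ContinuousLinearMap.compL ℝ ℓ²(ℕ, ℝ) X G T)
  have hg : ∀ S, ∃ C, ∀ n, ‖g n S‖ ≤ C := by
    intro S
    have hHS := hX _ _ (T.comp S) S T rfl ℕ b
    refine ⟨√(∑' j, ‖T (S (b j))‖ ^ 2), fun n => ?_⟩
    simp only [g, e, ContinuousLinearMap.comp_apply, ContinuousLinearMap.compL_apply,
      norm_evalFamily_apply]
    refine Real.sqrt_le_sqrt ?_
    rw [Fin.sum_univ_eq_sum_range (fun j => ‖T (S (b j))‖ ^ 2)]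
    exact hHS.sum_le_tsum _ fun _ _ => by positivity
  obtain ⟨C, hC⟩ := banach_steinhaus_pi g hg
  refine ⟨C, (norm_nonneg _).trans (hC 0), (isPSumming_two_iff T C).mpr fun n x => ?_⟩
  let S := sumInnerSMul (e n) x
  have hS : ∀ k, S (e n k) = x k := sumInnerSMul_apply_orthonormal (he n) x
  calc ‖evalFamily x T‖ = ‖g n S‖ := by simp [g, norm_evalFamily_apply, hS]
    _ ≤ C * ‖S‖ := (g n).le_of_opNorm_le (hC n) S
    _ ≤ C * weakL2Norm x := by
        gcongr
        · exact (norm_nonneg _).trans (hC 0)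
        · exact norm_sumInnerSMul_le (he n) x

theorem exists_isPSumming_two_mul_opNorm {Y : Type} [NormedAddCommGroup Y] [NormedSpace ℝ Y]
    [CompleteSpace Y] (h : ∀ T : X →L[ℝ] Y, ∃ c, 0 ≤ c ∧ IsPSumming 2 T c) :
    ∃ C, 0 ≤ C ∧ ∀ T : X →L[ℝ] Y, IsPSumming 2 T (C * ‖T‖) := by
  let g : ∀ x : Σ n, Fin n → X, (X →L[ℝ] Y) →L[ℝ] PiLp 2 (fun _ : Fin x.1 => Y) :=
    fun x => (weakL2Norm x.2)⁻¹ • evalFamily x.2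
  have hg : ∀ T, ∃ C, ∀ x, ‖g x T‖ ≤ C := by
    intro T
    obtain ⟨c, hc0, hc⟩ := h T
    refine ⟨c, fun ⟨n, x⟩ => ?_⟩
    have hw := weakL2Norm_nonneg x
    calc ‖g ⟨n, x⟩ T‖ = (weakL2Norm x)⁻¹ * ‖evalFamily x T‖ := by
          simp [g, norm_smul, abs_of_nonneg hw]
      _ ≤ (weakL2Norm x)⁻¹ * (c * weakL2Norm x) := by
          gcongr; exact (isPSumming_two_iff T c).mp hc n x
      _ ≤ c := by
          rw [mul_left_comm]
          exact mul_le_of_le_one_right hc0 (inv_mul_le_one_of_le₀ le_rfl hw)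
  obtain ⟨C, hC⟩ := banach_steinhaus_pi g hg
  have hC0 : 0 ≤ C := (norm_nonneg _).trans (hC ⟨0, Fin.elim0⟩)
  refine ⟨C, hC0, fun T => (isPSumming_two_iff T _).mpr fun n x => ?_⟩
  -- at `weakL2Norm x = 0` the factor `(weakL2Norm x)⁻¹` in `g` is `0`: use the bound of `T`
  obtain hw | hw := (weakL2Norm_nonneg x).eq_or_lt
  · obtain ⟨c, -, hc⟩ := h T
    simpa [← hw] using (isPSumming_two_iff T c).mp hc n x
  calc ‖evalFamily x T‖ = weakL2Norm x * ‖g ⟨n, x⟩ T‖ := by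
        simp [g, norm_smul, abs_of_pos hw, hw.ne']
    _ ≤ weakL2Norm x * (C * ‖T‖) := by gcongr; exact (g _).le_of_opNorm_le (hC _) T
    _ = C * ‖T‖ * weakL2Norm x := by ring

theorem isPSumming_two_mul_opNorm_of_ell2 {C : ℝ} (hC0 : 0 ≤ C)
    (hC : ∀ U : X →L[ℝ] ℓ²(ℕ, ℝ), IsPSumming 2 U (C * ‖U‖)) {H : Type}
    [NormedAddCommGroup H] [InnerProductSpace ℝ H] (T : X →L[ℝ] H) :
    IsPSumming 2 T (C * ‖T‖) := by
  refine (isPSumming_two_iff T _).mpr fun n x => ?_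
  let F := Submodule.span ℝ (Set.range fun k => T (x k))
  have : FiniteDimensional ℝ F := FiniteDimensional.span_of_finite ℝ (Set.finite_range _)
  obtain ⟨E, hE1, hE⟩ := F.exists_contraction_to_ell2_isometric_on
  calc ‖evalFamily x T‖ = ‖evalFamily x (E.comp T)‖ := by
        simp only [norm_evalFamily_apply, ContinuousLinearMap.comp_apply,
          hE _ (Submodule.subset_span (Set.mem_range_self _))]
    _ ≤ C * ‖E.comp T‖ * weakL2Norm x := (isPSumming_two_iff _ _).mp (hC _) n x
    _ ≤ C * ‖T‖ * weakL2Norm x := by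
        gcongr
        · exact weakL2Norm_nonneg x
        · exact (E.opNorm_comp_le T).trans (mul_le_of_le_one_left (norm_nonneg _) hE1)

theorem isHilbertSchmidtSpace_of_forall_isPSumming
    (h : ∀ T : X →L[ℝ] ℓ²(ℕ, ℝ), ∃ c, 0 ≤ c ∧ IsPSumming 2 T c) :
    IsHilbertSchmidtSpace X := by
  obtain ⟨C, hC0, hC⟩ := exists_isPSumming_two_mul_opNorm h
  intro H₁ H₂ _ _ _ _ _ _ T T₁ T₂ hT ι b
  subst hT
  refine summable_of_sum_le (c := (C * ‖T₂‖ * ‖T₁‖) ^ 2) (fun _ => by positivity) fun s => ?_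
  let x : Fin s.card → X := fun k => T₁ (b (s.equivFin.symm k))
  have hx : weakL2Norm x ≤ ‖T₁‖ := weakL2Norm_comp_orthonormal_le
    (b.orthonormal.comp _ (Subtype.val_injective.comp s.equivFin.symm.injective)) T₁
  have hT₂ := (isPSumming_two_iff T₂ _).mp (isPSumming_two_mul_opNorm_of_ell2 hC0 hC T₂) _ x
  calc ∑ i ∈ s, ‖(T₂.comp T₁) (b i)‖ ^ 2 = ‖evalFamily x T₂‖ ^ 2 := by
        rw [norm_evalFamily_apply, Real.sq_sqrt (by positivity), ← Finset.sum_coe_sort s,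
          ← Equiv.sum_comp s.equivFin.symm]
        rfl
    _ ≤ (C * ‖T₂‖ * ‖T₁‖) ^ 2 := by
        gcongr
        exact hT₂.trans (by gcongr)

end TwoSumming

/-- `X` is a Hilbert–Schmidt space iff every bounded operator `X → ℓ₂` is
2-summing. -/
theorem hilbertSchmidtSpace_iff_all_two_summing
    (X : Type) [NormedAddCommGroup X] [NormedSpace ℝ X] [CompleteSpace X] :
    IsHilbertSchmidtSpace X ↔
      ∀ T : X →L[ℝ] lp (fun _ : ℕ => ℝ) 2,
        ∃ c : ℝ, 0 ≤ c ∧ IsPSumming 2 T c :=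
  ⟨fun hX T => isPSumming_two_of_isHilbertSchmidtSpace hX T,
    isHilbertSchmidtSpace_of_forall_isPSumming⟩
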